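/- arXiv:2602.12642 — 2 statements merged into one kernel-verified Lean document; each statement's English description precedes it below -/
import Mathlib

section
/- Let Y be a finite set, π_old and π_θ fully supported probability distributions on Y, β > 0, and let a ≠ b be real numbers with r : Y → {a, b} taking value b on 'correct' outputs and a on 'incorrect' ones. Let Z* > 0 satisfy log Z* = Σ_y π_old(y)·(r(y)/β + log π_old(y) − log π_θ(y)), and define p_old = Σ_{y : r(y)=b} π_old(y). Then p_old = (β·log Z* − β·KL(π_old ‖ π_θ) − a)/(b − a). -/
open Real Finset

theorem stmt4 {Y : Type*} [Fintype Y] (πold πθ : Y → ℝ)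
    (hold_pos : ∀ y, 0 < πold y) (hold_sum : ∑ y, πold y = 1)
    (hθ_pos : ∀ y, 0 < πθ y) (hθ_sum : ∑ y, πθ y = 1)
    (a b : ℝ) (hab : a ≠ b)
    (r : Y → ℝ) (hr : ∀ y, r y = a ∨ r y = b) (β : ℝ) (hβ : 0 < β)
    (Zs : ℝ) (hZs : 0 < Zs)
    (hlog : Real.log Zs = ∑ y, πold y * (r y / β + Real.log (πold y) - Real.log (πθ y))) :
    (∑ y, if r y = b then πold y else 0)
      = (β * Real.log Zs - β * (∑ y, πold y * Real.log (πold y / πθ y)) - a) / (b - a) := by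
  have hKL : ∀ y, Real.log (πold y / πθ y) = Real.log (πold y) - Real.log (πθ y) :=
    fun y => Real.log_div (hold_pos y).ne' (hθ_pos y).ne'
  have hsplit : ∀ y, πold y * (r y / β + Real.log (πold y) - Real.log (πθ y))
      = πold y * r y / β + πold y * Real.log (πold y / πθ y) := by
    intro y; rw [hKL y]; ring
  rw [Finset.sum_congr rfl (fun y _ => hsplit y), Finset.sum_add_distrib] at hlog
  have hr2 : ∀ y, πold y * r y = a * πold y + (b - a) * (if r y = b then πold y else 0) := by
    intro y
    rcases hr y with h | h
    · rw [h, if_neg (h ▸ hab)]; ring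
    · rw [h, if_pos rfl]; ring
  have hsum : ∑ y, πold y * r y = a + (b - a) * ∑ y, (if r y = b then πold y else 0) := by
    rw [Finset.sum_congr rfl (fun y _ => hr2 y), Finset.sum_add_distrib, ← Finset.mul_sum,
      ← Finset.mul_sum, hold_sum, mul_one]
  rw [← Finset.sum_div, hsum] at hlog
  have hba : b - a ≠ 0 := sub_ne_zero.mpr (Ne.symm hab)
  field_simp at hlog ⊢
  linarith [hlog]
end

section
/- Let Y be a finite set, let π_ref be fully supported on Y, r : Y → {0,1}, β > 0, and p = Σ_{y:r(y)=1} π_ref(y) with 0 < p < 1. Let π* be the Gibbs distribution π*(y) = π_ref(y)·exp(r(y)/β)/Z with Z = 1 − p + p·exp(1/β). Then KL(π* ‖ π_ref) = q·(1/β) − log Z, where q = p·exp(1/β)/Z is the accuracy of π*, and this KL divergence tends to −log p as β → 0⁺. -/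
open Real Finset

theorem stmt15 {Y : Type*} [Fintype Y] (πref : Y → ℝ)
    (hpos : ∀ y, 0 < πref y) (hsum : ∑ y, πref y = 1)
    (r : Y → ℝ) (hr : ∀ y, r y = 0 ∨ r y = 1)
    (p : ℝ) (hp : p = ∑ y, if r y = 1 then πref y else 0)
    (hp0 : 0 < p) (hp1 : p < 1) :
    (∀ β > (0:ℝ), ∀ (Z : ℝ) (πs : Y → ℝ),
      Z = 1 - p + p * Real.exp (1 / β) →
      (∀ y, πs y = πref y * Real.exp (r y / β) / Z) →
      (∑ y, πs y * Real.log (πs y / πref y))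
        = (p * Real.exp (1 / β) / Z) * (1 / β) - Real.log Z)
    ∧ Filter.Tendsto
        (fun β : ℝ =>
          (p * Real.exp (1 / β) / (1 - p + p * Real.exp (1 / β))) * (1 / β)
            - Real.log (1 - p + p * Real.exp (1 / β)))
        (nhdsWithin 0 (Set.Ioi 0)) (nhds (-Real.log p)) := by
  constructor
  · intro β hβ Z πs hZ hπs
    have hZpos : 0 < Z := by
      rw [hZ]
      have := Real.exp_pos (1 / β)
      nlinarith
    -- sum of πref over wrong answers is 1 - p
    have hcomp : (∑ y, if r y = 1 then (0:ℝ) else πref y) = 1 - p := by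
      have : (∑ y, πref y) = (∑ y, if r y = 1 then πref y else 0)
          + (∑ y, if r y = 1 then (0:ℝ) else πref y) := by
        rw [← Finset.sum_add_distrib]
        apply Finset.sum_congr rfl
        intro y _
        by_cases h : r y = 1 <;> simp [h]
      rw [hsum, ← hp] at this
      linarith
    -- key sums
    have hsum1 : (∑ y, πref y * Real.exp (r y / β)) = Z := by
      have : ∀ y, πref y * Real.exp (r y / β)
          = (if r y = 1 then πref y * Real.exp (1 / β) else 0)
            + (if r y = 1 then 0 else πref y) := by
        intro y
        rcases hr y with h | h <;> simp [h]
      calc (∑ y, πref y * Real.exp (r y / β))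
          = (∑ y, if r y = 1 then πref y * Real.exp (1 / β) else 0)
            + (∑ y, if r y = 1 then (0:ℝ) else πref y) := by
            rw [← Finset.sum_add_distrib]
            exact Finset.sum_congr rfl (fun y _ => this y)
        _ = (∑ y, if r y = 1 then πref y else 0) * Real.exp (1 / β) + (1 - p) := by
            rw [hcomp, Finset.sum_mul]
            congr 1
            apply Finset.sum_congr rfl
            intro y _
            by_cases h : r y = 1 <;> simp [h]
        _ = Z := by rw [← hp, hZ]; ring
    have hsum2 : (∑ y, πref y * Real.exp (r y / β) * r y) = p * Real.exp (1 / β) := by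
      have : ∀ y, πref y * Real.exp (r y / β) * r y
          = (if r y = 1 then πref y else 0) * Real.exp (1 / β) := by
        intro y
        rcases hr y with h | h <;> simp [h]
      rw [Finset.sum_congr rfl (fun y _ => this y), ← Finset.sum_mul, ← hp]
    -- per-term log formula
    have hterm : ∀ y, πs y * Real.log (πs y / πref y)
        = πs y * r y * (1 / β) - πs y * Real.log Z := by
      intro y
      have hpy := hpos y
      have hlog : Real.log (πs y / πref y) = r y / β - Real.log Z := by
        have h1 : πs y / πref y = Real.exp (r y / β) / Z := by
          rw [hπs y]; field_simp
        rw [h1, Real.log_div (Real.exp_ne_zero _) hZpos.ne', Real.log_exp]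
      rw [hlog]; ring
    rw [Finset.sum_congr rfl (fun y _ => hterm y), Finset.sum_sub_distrib,
      ← Finset.sum_mul, ← Finset.sum_mul]
    have e1 : (∑ y, πs y * r y) = p * Real.exp (1 / β) / Z := by
      have : ∀ y, πs y * r y = πref y * Real.exp (r y / β) * r y / Z := by
        intro y; rw [hπs y]; ring
      rw [Finset.sum_congr rfl (fun y _ => this y), ← Finset.sum_div, hsum2]
    have e2 : (∑ y, πs y) = 1 := by
      have : ∀ y, πs y = πref y * Real.exp (r y / β) / Z := hπs
      rw [Finset.sum_congr rfl (fun y _ => this y), ← Finset.sum_div, hsum1,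
        div_self hZpos.ne']
    rw [e1, e2, one_mul]
  · -- the limit
    have hq : 0 < 1 - p := by linarith
    have key : Filter.Tendsto
        (fun t : ℝ => (p * Real.exp t / (1 - p + p * Real.exp t)) * t
          - Real.log (1 - p + p * Real.exp t)) Filter.atTop (nhds (-Real.log p)) := by
      have hZpos : ∀ t : ℝ, 0 < 1 - p + p * Real.exp t := by
        intro t
        have := Real.exp_pos t
        nlinarith
      have hwpos : ∀ t : ℝ, 0 < p + (1 - p) * Real.exp (-t) := by
        intro t
        have := Real.exp_pos (-t)
        nlinarith
      have heq : ∀ t : ℝ, (p * Real.exp t / (1 - p + p * Real.exp t)) * t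
          - Real.log (1 - p + p * Real.exp t)
          = -((1 - p) * t / (1 - p + p * Real.exp t))
            - Real.log (p + (1 - p) * Real.exp (-t)) := by
        intro t
        have hZ := hZpos t
        have hw := hwpos t
        have hfac : 1 - p + p * Real.exp t = Real.exp t * (p + (1 - p) * Real.exp (-t)) := by
          have hee : Real.exp t * Real.exp (-t) = 1 := by
            rw [← Real.exp_add]; simp
          linear_combination (p - 1) * hee
        have hlog : Real.log (1 - p + p * Real.exp t)
            = t + Real.log (p + (1 - p) * Real.exp (-t)) := by
          rw [hfac, Real.log_mul (Real.exp_ne_zero t) hw.ne', Real.log_exp]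
        rw [hlog]
        field_simp
        ring
      have h1 : Filter.Tendsto (fun t : ℝ => (1 - p) * t / (1 - p + p * Real.exp t))
          Filter.atTop (nhds 0) := by
        have hub : Filter.Tendsto (fun t : ℝ => ((1 - p) / p) * (t * Real.exp (-t)))
            Filter.atTop (nhds (((1 - p) / p) * 0)) := by
          apply Filter.Tendsto.const_mul
          have := Real.tendsto_pow_mul_exp_neg_atTop_nhds_zero 1
          simpa using this
        rw [mul_zero] at hub
        apply squeeze_zero' (g := fun t => ((1 - p) / p) * (t * Real.exp (-t)))
        · filter_upwards [Filter.eventually_ge_atTop (0:ℝ)] with t ht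
          positivity
        · filter_upwards [Filter.eventually_ge_atTop (0:ℝ)] with t ht
          have hZ := hZpos t
          have hle : p * Real.exp t ≤ 1 - p + p * Real.exp t := by linarith
          rw [div_le_iff₀ hZ]
          have hexp := Real.exp_pos t
          have : ((1 - p) / p) * (t * Real.exp (-t)) * (p * Real.exp t)
              = (1 - p) * t := by
            rw [Real.exp_neg]
            field_simp
          calc (1 - p) * t = ((1 - p) / p) * (t * Real.exp (-t)) * (p * Real.exp t) := this.symm
            _ ≤ ((1 - p) / p) * (t * Real.exp (-t)) * (1 - p + p * Real.exp t) := by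
                apply mul_le_mul_of_nonneg_left hle
                positivity
        · exact hub
      have h2 : Filter.Tendsto (fun t : ℝ => Real.log (p + (1 - p) * Real.exp (-t)))
          Filter.atTop (nhds (Real.log p)) := by
        apply Filter.Tendsto.log
        · have : Filter.Tendsto (fun t : ℝ => Real.exp (-t)) Filter.atTop (nhds 0) :=
            Real.tendsto_exp_neg_atTop_nhds_zero
          have := (this.const_mul (1 - p)).const_add p
          simpa using this
        · exact hp0.ne'
      have := (h1.neg).sub h2
      rw [neg_zero, zero_sub] at this
      exact Filter.Tendsto.congr (fun t => (heq t).symm) this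
    have hinv : Filter.Tendsto (fun β : ℝ => 1 / β) (nhdsWithin 0 (Set.Ioi 0))
        Filter.atTop := by
      simpa [one_div] using tendsto_inv_nhdsGT_zero
    exact key.comp hinv
end
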